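/- For an element f and an ideal I of a commutative ring A, one has V(I) ∩ D(f) = ∅ if and only if f belongs to the real radical √[R]{I}, i.e., if and only if there exist m ∈ ℕ and a sum of squares Σ b_i² in A with f^{2m} + Σ b_i² ∈ I. -/

import Mathlib

/-- An ideal `J` of a commutative ring is *real* if whenever a finite sum of squares
`∑ i, a i ^ 2` lies in `J`, each `a i` lies in `J`. -/
def IsRealIdeal {A : Type*} [CommRing A] (J : Ideal A) : Prop :=
  ∀ (n : ℕ) (a : Fin n → A), (∑ i, a i ^ 2) ∈ J → ∀ i, a i ∈ J

/-- The real Zariski spectrum: the set of real prime ideals of `A`. -/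
structure RealSpectrum (A : Type*) [CommRing A] where
  asIdeal : Ideal A
  isPrime : asIdeal.IsPrime
  isReal : IsRealIdeal asIdeal

namespace RealSpectrum

variable {A : Type*} [CommRing A]

instance (p : RealSpectrum A) : p.asIdeal.IsPrime := p.isPrime

/-- `V(I)`: the set of real prime ideals containing `I`. -/
def zeroLocus (I : Ideal A) : Set (RealSpectrum A) := {p | I ≤ p.asIdeal}

/-- `D(f)`: the set of real prime ideals not containing `f`. -/
def basicOpen (f : A) : Set (RealSpectrum A) := {p | f ∉ p.asIdeal}

end RealSpectrum

/-!
If no `f ^ (2 * m) + ∑ bᵢ²` lies in `I`, then `I` is disjoint from the multiplicative set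
`S = {f ^ (2 * m) + s | s a sum of squares}`, and an ideal `p ⊇ I` maximal among those disjoint
from `S` is prime. It is also real: if `a ^ 2 + s ∈ p` with `a ∉ p`, then some `q + a * c` with
`q ∈ p` lies in `S`, and `(q + a * c) ^ 2 + c ^ 2 * s` lies both in `S` and in `p`. As `f ^ 2 ∈ S`,
`p ∈ V(I) ∩ D(f)`. Conversely, a real prime containing `f ^ (2 * m) + ∑ bᵢ²` contains `f ^ m`,
hence `f`.
-/

section

variable {R : Type*} [CommSemiring R]

theorem isSumSq_iff_exists_sum_fin {s : R} :
    IsSumSq s ↔ ∃ (n : ℕ) (b : Fin n → R), s = ∑ i, b i ^ 2 := by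
  refine ⟨fun hs ↦ ?_, fun ⟨n, b, hs⟩ ↦ hs ▸ IsSumSq.sum_sq _ _⟩
  induction hs with
  | zero => exact ⟨0, ![], by simp⟩
  | @sq_add a s _ ih =>
    obtain ⟨n, b, rfl⟩ := ih
    exact ⟨n + 1, Fin.cons a b, by simp [Fin.sum_univ_succ, sq]⟩

def evenPowAddSumSq (f : R) : Submonoid R where
  carrier := {x | ∃ (m : ℕ) (s : R), IsSumSq s ∧ x = f ^ (2 * m) + s}
  one_mem' := ⟨0, 0, .zero, by simp⟩
  mul_mem' := by
    rintro _ _ ⟨m, s, hs, rfl⟩ ⟨k, t, ht, rfl⟩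
    refine ⟨m + k, f ^ (2 * m) * t + f ^ (2 * k) * s + s * t, ?_, by ring⟩
    simp only [pow_mul', sq]
    exact (((IsSumSq.mul_self _).mul ht).add ((IsSumSq.mul_self _).mul hs)).add (hs.mul ht)

theorem mem_evenPowAddSumSq {f x : R} :
    x ∈ evenPowAddSumSq f ↔ ∃ (m n : ℕ) (b : Fin n → R), x = f ^ (2 * m) + ∑ i, b i ^ 2 := by
  constructor
  · rintro ⟨m, s, hs, rfl⟩
    obtain ⟨n, b, rfl⟩ := isSumSq_iff_exists_sum_fin.1 hs
    exact ⟨m, n, b, rfl⟩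
  · rintro ⟨m, n, b, rfl⟩
    exact ⟨m, _, IsSumSq.sum_sq _ _, rfl⟩

theorem add_mem_evenPowAddSumSq {f x s : R} (hx : x ∈ evenPowAddSumSq f) (hs : IsSumSq s) :
    x + s ∈ evenPowAddSumSq f := by
  obtain ⟨m, t, ht, rfl⟩ := hx
  exact ⟨m, t + s, ht.add hs, by ring⟩

theorem sq_mem_evenPowAddSumSq (f : R) : f ^ 2 ∈ evenPowAddSumSq f :=
  ⟨1, 0, .zero, by simp⟩

theorem Ideal.exists_le_maximal_disjoint {I : Ideal R} {S : Set R} (hI : Disjoint (I : Set R) S) :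
    ∃ p : Ideal R, I ≤ p ∧ Maximal (fun J : Ideal R ↦ Disjoint (J : Set R) S) p := by
  refine zorn_le_nonempty₀ _ (fun c hc hchain J hJ ↦ ?_) I hI
  have : Nonempty c := ⟨⟨J, hJ⟩⟩
  refine ⟨sSup c, Set.disjoint_left.2 fun x hx ↦ ?_, fun _ ↦ le_sSup⟩
  obtain ⟨q, hq⟩ := (Submodule.mem_iSup_of_directed _ hchain.directed).1 (sSup_eq_iSup' c ▸ hx)
  exact Set.disjoint_left.1 (hc q.2) hq

end

section

variable {A : Type*} [CommRing A]

theorem isRealIdeal_iff {J : Ideal A} :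
    IsRealIdeal J ↔ ∀ a s : A, IsSumSq s → a ^ 2 + s ∈ J → a ∈ J := by
  constructor
  · intro hJ a s hs h
    obtain ⟨n, b, rfl⟩ := isSumSq_iff_exists_sum_fin.1 hs
    exact hJ (n + 1) (Fin.cons a b) (by simpa [Fin.sum_univ_succ] using h) 0
  · intro hJ n a ha i
    refine hJ (a i) _ (IsSumSq.sum_sq (Finset.univ.erase i) a) ?_
    rwa [Finset.add_sum_erase _ (fun j ↦ a j ^ 2) (Finset.mem_univ i)]

theorem isRealIdeal_of_maximal_disjoint {S : Submonoid A}
    (hS : ∀ x ∈ S, ∀ s, IsSumSq s → x + s ∈ S) {p : Ideal A}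
    (hp : Maximal (fun J : Ideal A ↦ Disjoint (J : Set A) S) p) : IsRealIdeal p := by
  refine isRealIdeal_iff.2 fun a s hs has ↦ ?_
  by_contra ha
  obtain ⟨x, hx, hxS⟩ := Set.not_disjoint_iff.1 <| hp.not_prop_of_gt <|
    Submodule.lt_sup_iff_notMem.2 ha
  obtain ⟨q, hq, z, hz, rfl⟩ := Submodule.mem_sup.1 hx
  obtain ⟨c, rfl⟩ := Ideal.mem_span_singleton.1 hz
  have hmem : (q + a * c) ^ 2 + c * c * s ∈ p := by
    have : (q + a * c) ^ 2 + c * c * s = q * (q + 2 * a * c) + c * c * (a ^ 2 + s) := by ring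
    rw [this]
    exact p.add_mem (p.mul_mem_right _ hq) (p.mul_mem_left _ has)
  exact Set.disjoint_left.1 hp.prop hmem <|
    hS _ (pow_mem hxS 2) _ ((IsSumSq.mul_self c).mul hs)

end

open RealSpectrum in
/-- `V(I) ∩ D(f) = ∅` if and only if `f ∈ √[R]{I}`, i.e. iff there are `m` and a sum of
squares `∑ bᵢ²` with `f ^ (2 * m) + ∑ bᵢ² ∈ I`. -/
theorem zeroLocus_inter_basicOpen_eq_empty_iff {A : Type*} [CommRing A]
    (f : A) (I : Ideal A) :
    zeroLocus I ∩ basicOpen f = ∅ ↔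
      ∃ (m n : ℕ) (b : Fin n → A), f ^ (2 * m) + ∑ i, b i ^ 2 ∈ I := by
  rw [Set.eq_empty_iff_forall_notMem]
  constructor
  · intro hempty
    by_contra hne
    have hI : Disjoint (I : Set A) (evenPowAddSumSq f) := Set.disjoint_right.2 fun x hx hxI ↦ by
      obtain ⟨m, n, b, rfl⟩ := mem_evenPowAddSumSq.1 hx
      exact hne ⟨m, n, b, hxI⟩
    obtain ⟨p, hIp, hp⟩ := Ideal.exists_le_maximal_disjoint hI
    have hprime := Ideal.isPrime_of_maximally_disjoint p _ hp.prop fun _ ↦ hp.not_prop_of_gt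
    have hreal := isRealIdeal_of_maximal_disjoint (fun _ hx _ ↦ add_mem_evenPowAddSumSq hx) hp
    have hf : f ∉ p := fun hf ↦
      Set.disjoint_left.1 hp.prop (p.pow_mem_of_mem hf 2 two_pos) (sq_mem_evenPowAddSumSq f)
    exact hempty ⟨p, hprime, hreal⟩ ⟨hIp, hf⟩
  · rintro ⟨m, n, b, hI⟩ p ⟨hIp, hf⟩
    have : (f ^ m) ^ 2 + ∑ i, b i ^ 2 ∈ p.asIdeal := by rw [← pow_mul']; exact hIp hI
    exact hf (p.isPrime.mem_of_pow_mem m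
      (isRealIdeal_iff.1 p.isReal _ _ (IsSumSq.sum_sq _ _) this))
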